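/- If x, y ∈ Z[ω] satisfy |x|² + |y|² = (√2)^m, then gde(|x+y|², √2) ≥ min(m, 1 + ⌊(gde(|x|², √2) + gde(|y|², √2))/2⌋). -/
import Mathlib


noncomputable section

open Complex ComplexConjugate

/-- The eighth root of unity ω = e^{iπ/4}. -/
def omg : ℂ := Complex.exp (Real.pi * Complex.I / 4)

/-- √2 as a complex number. -/
def rt2 : ℂ := (Real.sqrt 2 : ℝ)

/-- Membership in the ring Z[ω] = {a + bω + cω² + dω³ : a,b,c,d ∈ ℤ}. -/
def Zomega (z : ℂ) : Prop :=
  ∃ a b c d : ℤ, z = a + b * omg + c * omg ^ 2 + d * omg ^ 3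

/-- Membership in the ring Z[1/√2, i] = {u/(√2)^n : u ∈ Z[ω], n ∈ ℕ}. -/
def ZRoot2i (z : ℂ) : Prop :=
  ∃ u : ℂ, Zomega u ∧ ∃ n : ℕ, z = u / rt2 ^ n

/-- `b` divides `z` within the ring Z[ω]. -/
def ZDvd (b z : ℂ) : Prop := ∃ q : ℂ, Zomega q ∧ z = b * q

/-- `k` is the greatest dividing exponent of base `b` with respect to `z`:
`b^k` divides `z` in Z[ω], while `b^(k+1)` does not. -/
def IsGde (b z : ℂ) (k : ℕ) : Prop := ZDvd (b ^ k) z ∧ ¬ ZDvd (b ^ (k + 1)) z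

/-- `k` is the smallest denominator exponent of base √2 with respect to `z`:
the smallest integer `k` such that `z·(√2)^k ∈ Z[ω]`. -/
def IsSde (z : ℂ) (k : ℤ) : Prop :=
  Zomega (z * rt2 ^ k) ∧ ∀ j : ℤ, Zomega (z * rt2 ^ j) → k ≤ j

lemma rt2_sq : rt2 ^ 2 = 2 := by
  rw [rt2, ← Complex.ofReal_pow, Real.sq_sqrt (by norm_num : (2:ℝ) ≥ 0)]; norm_num
lemma omg_eq : omg = rt2/2 + (rt2/2) * I := by
  rw [omg, rt2]
  have : (Real.pi : ℂ) * I / 4 = (Real.pi/4 : ℝ) * I := by push_cast; ring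
  rw [this, Complex.exp_mul_I, ← Complex.ofReal_cos, ← Complex.ofReal_sin,
    Real.cos_pi_div_four, Real.sin_pi_div_four]
  push_cast; ring
lemma omg_sq : omg ^ 2 = I := by
  rw [omg_eq]; linear_combination (I/2) * rt2_sq + (rt2^2/4) * Complex.I_sq
lemma omg_pow4 : omg ^ 4 = -1 := by
  have : omg ^ 4 = (omg ^ 2) ^ 2 := by ring
  rw [this, omg_sq, Complex.I_sq]
lemma rt2_eq : rt2 = omg - omg ^ 3 := by
  have h3 : omg ^ 3 = I * omg := by rw [← omg_sq]; ring
  rw [h3, omg_eq]; linear_combination (rt2/2) * Complex.I_sq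
lemma conj_rt2 : conj rt2 = rt2 := Complex.conj_ofReal _
lemma conj_omg : conj omg = - omg ^ 3 := by
  have h3 : omg ^ 3 = I * omg := by rw [← omg_sq]; ring
  rw [h3, omg_eq]
  simp only [map_add, map_mul, map_div₀, conj_rt2, Complex.conj_I, map_ofNat]
  linear_combination (rt2/2) * Complex.I_sq
lemma rt2_ne : rt2 ≠ 0 := by
  intro h
  have := rt2_sq
  rw [h] at this
  norm_num at this

lemma conj_coords (a b c d : ℤ) :
    conj ((a:ℂ) + b * omg + c * omg^2 + d * omg^3)
    = ((a:ℂ) + (-d:ℤ) * omg + (-c:ℤ) * omg^2 + (-b:ℤ) * omg^3) := by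
  simp only [map_add, map_mul, map_pow, conj_omg, map_intCast]
  push_cast
  linear_combination (c*omg^2 - d*omg*(omg^4 - 1) + b*0) * omg_pow4

lemma mul_coords (a b c d e f g h : ℤ) :
    ((a:ℂ)+b*omg+c*omg^2+d*omg^3) * ((e:ℂ)+f*omg+g*omg^2+h*omg^3)
    = ((a*e - b*h - c*g - d*f : ℤ) : ℂ) + ((a*f+b*e-c*h-d*g : ℤ))*omg
      + ((a*g+b*f+c*e-d*h : ℤ))*omg^2 + ((a*h+b*g+c*f+d*e : ℤ))*omg^3 := by
  push_cast
  linear_combination ((b*h+c*g+d*f : ℂ) + (c*h+d*g)*omg + d*h*omg^2) * omg_pow4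

lemma key_real (p k : ℤ) (h : (p:ℝ) + k * (Real.sqrt 2/2) = 0) : p = 0 ∧ k = 0 := by
  by_cases hk : k = 0
  · subst hk; simp at h; exact ⟨by exact_mod_cast h, rfl⟩
  · exfalso
    have hs : Real.sqrt 2 = ((-2 * p : ℚ) / (k : ℚ) : ℚ) := by
      have hk' : (k:ℝ) ≠ 0 := Int.cast_ne_zero.mpr hk
      push_cast
      field_simp
      linarith
    exact irrational_sqrt_two ⟨_, hs.symm⟩

lemma repr_zero (a b c d : ℤ) (h : (a:ℂ) + b * omg + c * omg^2 + d * omg^3 = 0) :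
    a = 0 ∧ b = 0 ∧ c = 0 ∧ d = 0 := by
  have h3 : omg ^ 3 = I * omg := by rw [← omg_sq]; ring
  have hz : (a:ℂ) + b * omg + c * omg^2 + d * omg^3
      = ((a + (b - d) * (Real.sqrt 2/2) : ℝ) : ℂ) + ((c + (b + d) * (Real.sqrt 2/2) : ℝ) : ℂ) * I := by
    rw [h3, omg_sq, omg_eq]
    have : (((Real.sqrt 2 : ℝ)):ℂ) = rt2 := rfl
    push_cast [this]
    linear_combination (rt2/2 * d) * Complex.I_sq
  rw [hz] at h
  rw [Complex.ext_iff] at h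
  simp only [Complex.add_re, Complex.add_im, Complex.ofReal_re, Complex.ofReal_im,
    Complex.mul_re, Complex.mul_im, Complex.I_re, Complex.I_im, Complex.zero_re,
    Complex.zero_im] at h
  obtain ⟨h1, h2⟩ := h
  have e1 := key_real a (b - d) (by push_cast; linarith)
  have e2 := key_real c (b + d) (by push_cast; linarith)
  refine ⟨e1.1, by omega, e2.1, by omega⟩

lemma repr_unique {a b c d a' b' c' d' : ℤ}
    (h : (a:ℂ) + b * omg + c * omg^2 + d * omg^3 = (a':ℂ) + b' * omg + c' * omg^2 + d' * omg^3) :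
    a = a' ∧ b = b' ∧ c = c' ∧ d = d' := by
  have := repr_zero (a - a') (b - b') (c - c') (d - d') (by push_cast; linear_combination h)
  omega


lemma Zomega_mul {u v : ℂ} (hu : Zomega u) (hv : Zomega v) : Zomega (u * v) := by
  obtain ⟨a, b, c, d, rfl⟩ := hu
  obtain ⟨e, f, g, h, rfl⟩ := hv
  exact ⟨_, _, _, _, mul_coords a b c d e f g h⟩

lemma Zomega_add {u v : ℂ} (hu : Zomega u) (hv : Zomega v) : Zomega (u + v) := by
  obtain ⟨a, b, c, d, rfl⟩ := hu
  obtain ⟨e, f, g, h, rfl⟩ := hv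
  exact ⟨a+e, b+f, c+g, d+h, by push_cast; ring⟩

lemma Zomega_rt2 : Zomega rt2 := ⟨0, 1, 0, -1, by rw [rt2_eq]; push_cast; ring⟩

lemma Zomega_one : Zomega 1 := ⟨1, 0, 0, 0, by push_cast; ring⟩

lemma Zomega_rt2_pow (n : ℕ) : Zomega (rt2 ^ n) := by
  induction n with
  | zero => simpa using Zomega_one
  | succ k ih => rw [pow_succ]; exact Zomega_mul ih Zomega_rt2

lemma ZDvd_add {b z w : ℂ} (hz : ZDvd b z) (hw : ZDvd b w) : ZDvd b (z + w) := by
  obtain ⟨q1, hq1, rfl⟩ := hz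
  obtain ⟨q2, hq2, rfl⟩ := hw
  exact ⟨q1 + q2, Zomega_add hq1 hq2, by ring⟩

lemma ZDvd_mono {j k : ℕ} (h : j ≤ k) {z : ℂ} (hz : ZDvd (rt2 ^ k) z) : ZDvd (rt2 ^ j) z := by
  obtain ⟨q, hq, rfl⟩ := hz
  refine ⟨rt2 ^ (k - j) * q, Zomega_mul (Zomega_rt2_pow _) hq, ?_⟩
  rw [← mul_assoc, ← pow_add]
  congr 2
  omega

lemma ZDvd_rt2_pow {j m : ℕ} (h : j ≤ m) : ZDvd (rt2 ^ j) (rt2 ^ m) := by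
  refine ⟨rt2 ^ (m - j), Zomega_rt2_pow _, ?_⟩
  rw [← pow_add]; congr 1; omega

/-- the norm of a Zomega element in coordinates -/
lemma norm_coords (a b c d : ℤ) :
    ((a:ℂ)+b*omg+c*omg^2+d*omg^3) * conj ((a:ℂ)+b*omg+c*omg^2+d*omg^3)
    = ((a^2+b^2+c^2+d^2 : ℤ) : ℂ) + ((a*b+b*c+c*d-d*a : ℤ))*omg
      + ((0:ℤ))*omg^2 + ((-(a*b+b*c+c*d-d*a) : ℤ))*omg^3 := by
  rw [conj_coords, mul_coords]
  push_cast; ring_nf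

/-- multiplication by rt2 in coordinates -/
lemma rt2_mul_coords (p q r s : ℤ) :
    rt2 * ((p:ℂ)+q*omg+r*omg^2+s*omg^3)
    = ((q - s : ℤ) : ℂ) + ((p+r : ℤ))*omg + ((q+s : ℤ))*omg^2 + ((r-p : ℤ))*omg^3 := by
  rw [rt2_eq]
  push_cast
  linear_combination ((s:ℂ) - q - r*omg - s*omg^2) * omg_pow4

lemma even_sum_of_even_sq {a b c d S : ℤ} (h : a^2+b^2+c^2+d^2 = S + S) :
    Even (a+b+c+d) := by
  obtain ⟨wa, hwa⟩ := Int.even_mul_succ_self (a-1)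
  obtain ⟨wb, hwb⟩ := Int.even_mul_succ_self (b-1)
  obtain ⟨wc, hwc⟩ := Int.even_mul_succ_self (c-1)
  obtain ⟨wd, hwd⟩ := Int.even_mul_succ_self (d-1)
  exact ⟨S - (wa+wb+wc+wd), by linear_combination h - hwa - hwb - hwc - hwd⟩

lemma keyA {z : ℂ} (hz : Zomega z) (h : ZDvd 2 (z * conj z)) : ZDvd rt2 z := by
  obtain ⟨a, b, c, d, rfl⟩ := hz
  obtain ⟨q0, ⟨e, f, g, hh, rfl⟩, heq⟩ := h
  rw [norm_coords] at heq
  have h2q : (2:ℂ) * (((e:ℤ):ℂ)+(f:ℤ)*omg+(g:ℤ)*omg^2+(hh:ℤ)*omg^3)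
      = ((2*e : ℤ):ℂ) + ((2*f:ℤ):ℂ)*omg + ((2*g:ℤ):ℂ)*omg^2 + ((2*hh:ℤ):ℂ)*omg^3 := by
    push_cast; ring
  rw [h2q] at heq
  obtain ⟨hS, hT, -, -⟩ := repr_unique heq
  have hsum : Even (a+b+c+d) := even_sum_of_even_sq (S := e) (by linear_combination hS)
  have hprod : Even ((a+c)*(b+d)) := ⟨f + a*d, by linear_combination hT⟩
  have hboth : Even (a+c) ∧ Even (b+d) := by
    obtain ⟨r, hr⟩ := hsum
    rcases Int.even_mul.mp hprod with hpar|hpar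
    · obtain ⟨t, ht⟩ := hpar
      exact ⟨⟨t, ht⟩, ⟨r - t, by omega⟩⟩
    · obtain ⟨t, ht⟩ := hpar
      exact ⟨⟨r - t, by omega⟩, ⟨t, ht⟩⟩
  obtain ⟨⟨α, hα⟩, ⟨β, hβ⟩⟩ := hboth
  refine ⟨((b-β:ℤ):ℂ) + ((α:ℤ):ℂ)*omg + ((β:ℤ):ℂ)*omg^2 + ((α-a:ℤ):ℂ)*omg^3,
    ⟨_,_,_,_, rfl⟩, ?_⟩
  rw [rt2_mul_coords]
  have hαc : (a:ℂ) + c = α + α := by exact_mod_cast hα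
  have hβc : (b:ℂ) + d = β + β := by exact_mod_cast hβ
  push_cast
  linear_combination omg^2 * hαc + omg^3 * hβc

lemma keyB (k : ℕ) : ∀ {z : ℂ}, Zomega z → ZDvd (rt2 ^ (2*k)) (z * conj z) →
    ZDvd (rt2 ^ k) z := by
  induction k with
  | zero => intro z hz _; exact ⟨z, hz, by simp⟩
  | succ n ih =>
    intro z hz h
    have h2 : ZDvd 2 (z * conj z) := by
      have := ZDvd_mono (show 2 ≤ 2*(n+1) by omega) h
      rwa [rt2_sq] at this
    obtain ⟨w, hw, rfl⟩ := keyA hz h2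
    obtain ⟨Q, hQ, hQe⟩ := h
    have hcw : (rt2*w) * conj (rt2*w) = rt2^2 * (w * conj w) := by
      rw [map_mul, conj_rt2]; ring
    have hww : w * conj w = rt2^(2*n) * Q := by
      have h1 : rt2^2 * (w * conj w) = rt2^2 * (rt2^(2*n) * Q) := by
        rw [← hcw, hQe, show 2*(n+1) = 2 + 2*n by omega, pow_add]; ring
      exact mul_left_cancel₀ (pow_ne_zero 2 rt2_ne) h1
    obtain ⟨q', hq', hq'e⟩ := ih hw ⟨Q, hQ, hww⟩
    exact ⟨q', hq', by rw [hq'e, pow_succ]; ring⟩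

lemma cross_coords (a b c d e f g h : ℤ) :
    ((a:ℂ)+b*omg+c*omg^2+d*omg^3) * conj ((e:ℂ)+f*omg+g*omg^2+h*omg^3)
    + conj ((a:ℂ)+b*omg+c*omg^2+d*omg^3) * ((e:ℂ)+f*omg+g*omg^2+h*omg^3)
    = ((2*(a*e+b*f+c*g+d*h) : ℤ):ℂ)
      + ((a*f+b*e+b*g+c*f+c*h+d*g-a*h-d*e : ℤ):ℂ)*omg
      + ((0:ℤ):ℂ)*omg^2 + ((-(a*f+b*e+b*g+c*f+c*h+d*g-a*h-d*e) : ℤ):ℂ)*omg^3 := by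
  rw [conj_coords, conj_coords, mul_coords, mul_coords]
  push_cast; ring

lemma crossC0 {u v : ℂ} (hu : Zomega u) (hv : Zomega v) :
    ZDvd rt2 (u * conj v + conj u * v) := by
  obtain ⟨a,b,c,d,rfl⟩ := hu; obtain ⟨e,f,g,h,rfl⟩ := hv
  rw [cross_coords]
  refine ⟨((a*f+b*e+b*g+c*f+c*h+d*g-a*h-d*e : ℤ):ℂ)
    + ((a*e+b*f+c*g+d*h : ℤ):ℂ)*omg + ((0:ℤ):ℂ)*omg^2
    + ((-(a*e+b*f+c*g+d*h) : ℤ):ℂ)*omg^3, ⟨_,_,_,_, rfl⟩, ?_⟩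
  rw [rt2_mul_coords]
  push_cast; ring

lemma norm_even {a b c d : ℤ}
    (h : ZDvd rt2 (((a:ℂ)+b*omg+c*omg^2+d*omg^3) * conj ((a:ℂ)+b*omg+c*omg^2+d*omg^3))) :
    Even (a+b+c+d) := by
  obtain ⟨q0, ⟨p,q,r,s,rfl⟩, heq⟩ := h
  rw [norm_coords, rt2_mul_coords] at heq
  obtain ⟨h1, -, h3, -⟩ := repr_unique heq
  exact even_sum_of_even_sq (S := q) (by omega)

lemma crossC2 {u v : ℂ} (hu : Zomega u) (hv : Zomega v)
    (h1 : ZDvd rt2 (u * conj u)) (h2 : ZDvd rt2 (v * conj v)) :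
    ZDvd 2 (u * conj v + conj u * v) := by
  obtain ⟨a,b,c,d,rfl⟩ := hu; obtain ⟨e,f,g,h,rfl⟩ := hv
  obtain ⟨σ, hσ⟩ := norm_even h1
  obtain ⟨τ, hτ⟩ := norm_even h2
  rw [cross_coords]
  have hC : a*f+b*e+b*g+c*f+c*h+d*g-a*h-d*e
      = 2*(τ*(a+c) + σ*(e+g) - (a+c)*(e+g) - a*h - d*e) := by
    linear_combination (e+g)*hσ + (a+c)*hτ
  refine ⟨((a*e+b*f+c*g+d*h:ℤ):ℂ)
    + ((τ*(a+c) + σ*(e+g) - (a+c)*(e+g) - a*h - d*e : ℤ):ℂ)*omg + ((0:ℤ):ℂ)*omg^2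
    + ((-(τ*(a+c) + σ*(e+g) - (a+c)*(e+g) - a*h - d*e) : ℤ):ℂ)*omg^3,
    ⟨_,_,_,_, rfl⟩, ?_⟩
  have hCc : ((a*f+b*e+b*g+c*f+c*h+d*g-a*h-d*e : ℤ):ℂ)
      = 2*((τ*(a+c) + σ*(e+g) - (a+c)*(e+g) - a*h - d*e : ℤ):ℂ) := by exact_mod_cast hC
  push_cast at hCc ⊢
  linear_combination (omg - omg^3) * hCc

/-- If |x|² + |y|² = (√2)^m then
gde(|x+y|², √2) ≥ min(m, 1 + ⌊(gde(|x|², √2) + gde(|y|², √2))/2⌋). -/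
theorem stmt10 (x y : ℂ) (hx : Zomega x) (hy : Zomega y) (m : ℕ)
    (hsum : x * (starRingEnd ℂ) x + y * (starRingEnd ℂ) y = rt2 ^ m)
    (kx ky : ℕ)
    (hkx : IsGde rt2 (x * (starRingEnd ℂ) x) kx)
    (hky : IsGde rt2 (y * (starRingEnd ℂ) y) ky) :
    ZDvd (rt2 ^ min m (1 + (kx + ky) / 2)) ((x + y) * (starRingEnd ℂ) (x + y)) := by
  obtain ⟨hxx, -⟩ := hkx
  obtain ⟨hyy, -⟩ := hky
  set p := kx / 2 with hp
  set q := ky / 2 with hq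
  obtain ⟨u, hu, hxu⟩ := keyB p hx (ZDvd_mono (by omega) hxx)
  obtain ⟨v, hv, hyv⟩ := keyB q hy (ZDvd_mono (by omega) hyy)
  have hconjx : conj x = rt2^p * conj u := by rw [hxu, map_mul, map_pow, conj_rt2]
  have hconjy : conj y = rt2^q * conj v := by rw [hyv, map_mul, map_pow, conj_rt2]
  have hcross : x * conj y + conj x * y
      = rt2^(p+q) * (u * conj v + conj u * v) := by
    rw [hconjx, hconjy, hxu, hyv, pow_add]; ring
  have hkey : ZDvd (rt2 ^ (1 + (kx+ky)/2)) (x * conj y + conj x * y) := by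
    by_cases hodd : kx % 2 = 1 ∧ ky % 2 = 1
    · have hx1 : ZDvd rt2 (u * conj u) := by
        obtain ⟨Q, hQ, hQe⟩ := hxx
        refine ⟨Q, hQ, mul_left_cancel₀ (pow_ne_zero (2*p) rt2_ne) ?_⟩
        have h1 : x * conj x = rt2^(2*p) * (u * conj u) := by
          rw [hconjx, hxu, two_mul, pow_add]; ring
        rw [← h1, hQe, show kx = 2*p+1 by omega, pow_succ]; ring
      have hy1 : ZDvd rt2 (v * conj v) := by
        obtain ⟨Q, hQ, hQe⟩ := hyy
        refine ⟨Q, hQ, mul_left_cancel₀ (pow_ne_zero (2*q) rt2_ne) ?_⟩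
        have h1 : y * conj y = rt2^(2*q) * (v * conj v) := by
          rw [hconjy, hyv, two_mul, pow_add]; ring
        rw [← h1, hQe, show ky = 2*q+1 by omega, pow_succ]; ring
      obtain ⟨w, hw, hwe⟩ := crossC2 hu hv hx1 hy1
      refine ZDvd_mono (show 1 + (kx+ky)/2 ≤ p+q+2 by omega) ⟨w, hw, ?_⟩
      have h2 : rt2^(p+q+2) = rt2^(p+q) * 2 := by rw [pow_add, rt2_sq]
      rw [hcross, hwe, h2]; ring
    · obtain ⟨w, hw, hwe⟩ := crossC0 hu hv
      refine ZDvd_mono (show 1 + (kx+ky)/2 ≤ p+q+1 by omega) ⟨w, hw, ?_⟩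
      rw [hcross, hwe, pow_succ]; ring
  have hfinal : (x+y) * conj (x+y) = rt2^m + (x * conj y + conj x * y) := by
    rw [← hsum, map_add]; ring
  rw [hfinal]
  exact ZDvd_add (ZDvd_rt2_pow (by omega)) (ZDvd_mono (by omega) hkey)
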